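/- For biased binary sequences, the fourth moment of S equals n(n^2-1)(5n^3 - 6n^2 - 5n + 14) p^2 q^2 / 15 + n(n^2-1)(3n^2 - 7) pq (p-q)^2 / 15. -/

import Mathlib

open Finset

/-- Kendall score S = S⁺ - S⁻ of a finite sequence: S⁺ counts the pairs of positions in which
the earlier element exceeds the later one, S⁻ those in which the earlier element is smaller
(the paper's convention: S(0 1 1 2 0 2 1) = 5 - 11 = -6). -/
def kendallS {n : ℕ} {α : Type*} [LinearOrder α] (x : Fin n → α) : ℤ :=
  ((Finset.univ.filter (fun p : Fin n × Fin n => p.2 < p.1 ∧ x p.1 < x p.2)).card : ℤ) -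
  ((Finset.univ.filter (fun p : Fin n × Fin n => p.2 < p.1 ∧ x p.2 < x p.1)).card : ℤ)

/-!
For a binary sequence each pair `j < i` contributes `[xᵢ < xⱼ] - [xⱼ < xᵢ] = xⱼ - xᵢ`, so
`S = ∑ₖ (n - 1 - 2k) xₖ`. The coefficients `cₖ = n - 1 - 2k` sum to zero, hence
`S = ∑ₖ cₖ (xₖ - q)` is a linear combination of independent centred variables, and
`E[S⁴] = μ₄ ∑ cₖ⁴ + 3 μ₂² ((∑ cₖ²)² - ∑ cₖ⁴)` with `μ₂ = pq`, `μ₄ = pq(1 - 3pq)`.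
The power sums of the `cₖ` follow by induction from `n` to `n + 2`: the coefficients for
`n + 2` are those for `n` together with `±(n + 1)`.
-/

section ProductMean

variable {β : Type*} [Fintype β] (w : β → ℝ)

def productMean {n : ℕ} (F : (Fin n → β) → ℝ) : ℝ := ∑ x, (∏ k, w (x k)) * F x

lemma productMean_const_one {n : ℕ} (hw : ∑ b, w b = 1) :
    productMean w (fun _ : Fin n → β => 1) = 1 := by
  simp [productMean, ← Fintype.prod_sum, hw]

lemma productMean_succ {n : ℕ} (F : (Fin (n + 1) → β) → ℝ) :
    productMean w F = ∑ b, w b * productMean w (fun y => F (Fin.cons b y)) := by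
  rw [productMean, ← (Fin.consEquiv fun _ => β).sum_comp, Fintype.sum_prod_type]
  simp only [productMean, Fin.consEquiv_apply, Fin.prod_univ_succ, Fin.cons_zero, Fin.cons_succ,
    mul_sum, mul_assoc]
  rfl

lemma productMean_linear_pow_succ {X : β → ℝ} {n : ℕ} (c : Fin (n + 1) → ℝ) (N : ℕ) :
    productMean w (fun x => (∑ k, c k * X (x k)) ^ N)
      = ∑ m ∈ range (N + 1), c 0 ^ m * (∑ b, w b * X b ^ m)
          * productMean w (fun y => (∑ k, c k.succ * X (y k)) ^ (N - m)) * N.choose m := by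
  rw [productMean_succ]
  simp only [Fin.sum_univ_succ, Fin.cons_zero, Fin.cons_succ, add_pow, productMean, mul_sum,
    sum_mul]
  simp_rw [sum_comm (s := univ) (t := range (N + 1))]
  refine sum_congr rfl fun m _ => ?_
  rw [sum_comm]
  refine sum_congr rfl fun y _ => sum_congr rfl fun b _ => ?_
  ring

variable {w} {X : β → ℝ}

lemma productMean_linear {n : ℕ} (hw : ∑ b, w b = 1) (hX : ∑ b, w b * X b = 0)
    (c : Fin n → ℝ) : productMean w (fun x => ∑ k, c k * X (x k)) = 0 := by
  induction n with
  | zero => simp [productMean]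
  | succ n ih =>
    simpa [sum_range_succ, ih, hw, hX] using productMean_linear_pow_succ w (X := X) c 1

lemma productMean_linear_sq {n : ℕ} (hw : ∑ b, w b = 1) (hX : ∑ b, w b * X b = 0)
    (c : Fin n → ℝ) :
    productMean w (fun x => (∑ k, c k * X (x k)) ^ 2) = (∑ b, w b * X b ^ 2) * ∑ k, c k ^ 2 := by
  induction n with
  | zero => simp [productMean]
  | succ n ih =>
    rw [productMean_linear_pow_succ]
    simp only [sum_range_succ, range_one, sum_singleton, pow_zero, pow_one, mul_one, one_mul,
      tsub_zero, tsub_self, Nat.add_one_sub_one, Nat.choose, Nat.cast_one, hw, hX, ih,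
      productMean_linear hw hX, productMean_const_one w hw, mul_zero, zero_mul, add_zero,
      Fin.sum_univ_succ]
    ring

lemma productMean_linear_pow_four {n : ℕ} (hw : ∑ b, w b = 1) (hX : ∑ b, w b * X b = 0)
    (c : Fin n → ℝ) :
    productMean w (fun x => (∑ k, c k * X (x k)) ^ 4) =
      (∑ b, w b * X b ^ 4) * ∑ k, c k ^ 4
        + 3 * (∑ b, w b * X b ^ 2) ^ 2 * ((∑ k, c k ^ 2) ^ 2 - ∑ k, c k ^ 4) := by
  induction n with
  | zero => simp [productMean]
  | succ n ih =>
    rw [productMean_linear_pow_succ]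
    simp only [sum_range_succ, range_one, sum_singleton, pow_zero, pow_one, mul_one, one_mul,
      tsub_zero, tsub_self, Nat.add_one_sub_one, Nat.reduceSub, Nat.reduceAdd, Nat.choose,
      Nat.cast_one, Nat.cast_ofNat, hw, hX, ih, productMean_linear hw hX,
      productMean_linear_sq hw hX, productMean_const_one w hw, mul_zero, zero_mul, add_zero,
      Fin.sum_univ_succ]
    ring

end ProductMean

lemma sum_sum_ite_lt_sub {R : Type*} [CommRing R] {n : ℕ} (f : Fin n → R) :
    ∑ i, ∑ j, (if j < i then f j - f i else 0)
      = ∑ k : Fin n, ((n : R) - 1 - 2 * (k : ℕ)) * f k := by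
  have hlater (j : Fin n) :
      ∑ i, (if j < i then f j else 0) = ((n : R) - 1 - (j : ℕ)) * f j := by
    rw [sum_ite, sum_const, sum_const_zero, add_zero, filter_lt_eq_Ioi, Fin.card_Ioi, nsmul_eq_mul,
      Nat.sub_sub, Nat.cast_sub (by omega), Nat.cast_add, Nat.cast_one, sub_add_eq_sub_sub]
  have hearlier (i : Fin n) : ∑ j, (if j < i then f i else 0) = (i : ℕ) * f i := by
    rw [sum_ite, sum_const, sum_const_zero, add_zero, filter_gt_eq_Iio, Fin.card_Iio, nsmul_eq_mul]
  have hsplit (i j : Fin n) :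
      (if j < i then f j - f i else 0) = (if j < i then f j else 0) - if j < i then f i else 0 := by
    split_ifs <;> simp
  simp only [hsplit, sum_sub_distrib]
  rw [sum_comm, ← sum_sub_distrib]
  simp only [hlater, hearlier]
  exact sum_congr rfl fun k _ => by ring

lemma kendallS_fin_two {n : ℕ} (x : Fin n → Fin 2) :
    kendallS x = ∑ i, ∑ j, if j < i then ((x j : ℕ) : ℤ) - (x i : ℕ) else 0 := by
  have hpair : ∀ u v : Fin 2,
      ((if u < v then 1 else 0) - if v < u then 1 else 0 : ℤ) = (v : ℕ) - (u : ℕ) := by decide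
  rw [kendallS, card_filter, card_filter, ← Fintype.sum_prod_type']
  push_cast
  rw [← sum_sub_distrib]
  refine sum_congr rfl fun p _ => ?_
  by_cases hlt : p.2 < p.1
  · simpa [hlt] using hpair (x p.1) (x p.2)
  · simp [hlt]

lemma kendallS_fin_two_eq_sum {n : ℕ} (x : Fin n → Fin 2) :
    (kendallS x : ℝ) = ∑ k : Fin n, ((n : ℝ) - 1 - 2 * (k : ℕ)) * (x k : ℕ) := by
  rw [kendallS_fin_two, ← sum_sum_ite_lt_sub]
  push_cast
  rfl

lemma sum_range_add_two_centered (g : ℝ → ℝ) (n : ℕ) :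
    ∑ k ∈ range (n + 2), g ((n + 2 : ℕ) - 1 - 2 * k)
      = ∑ k ∈ range n, g (n - 1 - 2 * k) + g (n + 1) + g (-(n + 1)) := by
  rw [sum_range_succ, sum_range_succ']
  push_cast
  congr 2
  · exact sum_congr rfl fun k _ => by ring_nf
  · ring_nf
  · ring_nf

lemma sum_range_centered (n : ℕ) : ∑ k ∈ range n, ((n : ℝ) - 1 - 2 * k) = 0 := by
  induction n using Nat.twoStepInduction with
  | zero => simp
  | one => simp
  | more n ih _ => rw [sum_range_add_two_centered (fun t => t), ih]; ring

lemma sum_range_centered_sq (n : ℕ) :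
    ∑ k ∈ range n, ((n : ℝ) - 1 - 2 * k) ^ 2 = n * ((n : ℝ) ^ 2 - 1) / 3 := by
  induction n using Nat.twoStepInduction with
  | zero => simp
  | one => simp
  | more n ih _ => rw [sum_range_add_two_centered (· ^ 2), ih]; push_cast; ring

lemma sum_range_centered_pow_four (n : ℕ) :
    ∑ k ∈ range n, ((n : ℝ) - 1 - 2 * k) ^ 4
      = n * ((n : ℝ) ^ 2 - 1) * (3 * (n : ℝ) ^ 2 - 7) / 15 := by
  induction n using Nat.twoStepInduction with
  | zero => simp
  | one => simp
  | more n ih _ => rw [sum_range_add_two_centered (· ^ 4), ih]; push_cast; ring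

theorem kendall_fourth_moment_biased_general (n : ℕ) (p q : ℝ) (hpq : p + q = 1) :
    ∑ x : Fin n → Fin 2, (∏ k, if x k = 0 then p else q) * (kendallS x : ℝ) ^ 4
    = (n : ℝ) * ((n : ℝ) ^ 2 - 1)
        * (5 * (n : ℝ) ^ 3 - 6 * (n : ℝ) ^ 2 - 5 * (n : ℝ) + 14) * p ^ 2 * q ^ 2 / 15
      + (n : ℝ) * ((n : ℝ) ^ 2 - 1) * (3 * (n : ℝ) ^ 2 - 7) * p * q * (p - q) ^ 2 / 15 := by
  set w : Fin 2 → ℝ := fun b => if b = 0 then p else q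
  set X : Fin 2 → ℝ := fun b => (b : ℕ) - q
  set c : Fin n → ℝ := fun k => (n : ℝ) - 1 - 2 * (k : ℕ)
  have hmoment (j : ℕ) : ∑ b, w b * X b ^ j = p * (-q) ^ j + q * (1 - q) ^ j := by
    simp [w, X, Fin.sum_univ_two]
  have hw : ∑ b, w b = 1 := by simpa [w, Fin.sum_univ_two] using hpq
  have hX : ∑ b, w b * X b = 0 := by
    have h1 := hmoment 1
    simp only [pow_one] at h1
    linear_combination h1 - q * hpq
  have hc (j : ℕ) : ∑ k, c k ^ j = ∑ k ∈ range n, ((n : ℝ) - 1 - 2 * k) ^ j :=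
    Fin.sum_univ_eq_sum_range (fun k => ((n : ℝ) - 1 - 2 * k) ^ j) n
  have hS (x : Fin n → Fin 2) : (kendallS x : ℝ) = ∑ k, c k * X (x k) := by
    have hc1 : ∑ k, c k = 0 := by simpa only [pow_one, sum_range_centered] using hc 1
    simp only [kendallS_fin_two_eq_sum, X, mul_sub, sum_sub_distrib, ← sum_mul, hc1, zero_mul,
      sub_zero]
    rfl
  calc _ = productMean w (fun x => (∑ k, c k * X (x k)) ^ 4) := by simp only [hS]; rfl
    _ = _ := productMean_linear_pow_four hw hX c
    _ = _ := by
      rw [hc 4, hc 2, sum_range_centered_sq, sum_range_centered_pow_four, hmoment, hmoment]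
      obtain rfl : q = 1 - p := by linarith
      ring

/-- Biased binary case: the fourth moment of S. -/
theorem kendall_fourth_moment_biased (n : ℕ) (p q : ℝ) (hp : 0 ≤ p) (hq : 0 ≤ q)
    (hpq : p + q = 1) :
    ∑ x : Fin n → Fin 2, (∏ k, if x k = 0 then p else q) * (kendallS x : ℝ) ^ 4
    = (n : ℝ) * ((n : ℝ) ^ 2 - 1)
        * (5 * (n : ℝ) ^ 3 - 6 * (n : ℝ) ^ 2 - 5 * (n : ℝ) + 14) * p ^ 2 * q ^ 2 / 15
      + (n : ℝ) * ((n : ℝ) ^ 2 - 1) * (3 * (n : ℝ) ^ 2 - 7) * p * q * (p - q) ^ 2 / 15 :=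
  kendall_fourth_moment_biased_general n p q hpq
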